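/- arXiv:2202.04796 — 3 statements merged into one kernel-verified Lean document; each statement's English description precedes it below -/
import Mathlib

section
/- (Hoeffding inequality for U-statistics.) Suppose 0 < μ < 1. Then for every x ∈ (0,1), P( U ≤ x ) ≤ exp( −m · h₁( min(x,μ) ; μ ) ), where h₁(y; μ) = y·log(y/μ) + (1−y)·log((1−y)/(1−μ)) for y ∈ (0,1), extended by h₁(0;μ) = log(1/(1−μ)) and h₁(1;μ) = log(1/μ). -/
/-!
Hoeffding's argument. Fix `m = ⌊n/k⌋` disjoint blocks of `k` indices and let `W(x)` be the sum of
the kernel over the blocks of a sample `x`. Averaging over all permutations `σ` of the sample,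
`m U = (1/n!) ∑_σ W(Z ∘ σ)`, because as `σ` runs over the permutations, each block is carried
onto every `k`-tuple of distinct indices equally often. Jensen's inequality and exchangeability
then give `E exp(t m U) ≤ E exp(t W(Z))`; the blocks are independent with mean `μ`, and on `[0,1]`
the exponential lies below its chord, so `E exp(t W(Z)) ≤ (1 - μ + μ eᵗ)ᵐ`. The Chernoff bound at
the optimal `t ≤ 0` is `exp(-m h₁(x; μ))`.
-/

open MeasureTheory ProbabilityTheory

/-- Tuples of `k` pairwise distinct indices from `Fin m`, i.e. injections `Fin k → Fin m`. -/
abbrev TransferUQ.Tup (k m : ℕ) := {g : Fin k → Fin m // Function.Injective g}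

/-- The U-statistic of degree `k` with kernel `φ`, evaluated at the sample path `ω`:
`U = ((n-k)!/n!) ∑_{(i_1,…,i_k) ∈ 𝕋_{k,n}} φ(Z_{i_1},…,Z_{i_k})`. -/
noncomputable def TransferUQ.Ustat {Ω 𝒵 : Type*} (n k : ℕ) (φ : (Fin k → 𝒵) → ℝ)
    (Z : Fin n → Ω → 𝒵) (ω : Ω) : ℝ :=
  ((n - k).factorial : ℝ) / (n.factorial : ℝ) *
    ∑ g : TransferUQ.Tup k n, φ (fun i => Z (g.val i) ω)

/-- The Kullback–Leibler-type function `h₁(y;μ) = y log(y/μ) + (1-y) log((1-y)/(1-μ))`,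
extended by the conventions `h₁(0;μ) = log(1/(1-μ))` and `h₁(1;μ) = log(1/μ)`. -/
noncomputable def TransferUQ.h1 (y μ : ℝ) : ℝ :=
  if y = 0 then Real.log (1 / (1 - μ))
  else if y = 1 then Real.log (1 / μ)
  else y * Real.log (y / μ) + (1 - y) * Real.log ((1 - y) / (1 - μ))

namespace MulAction

theorem card_nsmul_sum_smul_eq {G X M : Type*} [Group G] [Fintype G] [MulAction G X]
    [Fintype X] [IsPretransitive G X] [AddCommMonoid M] (f : X → M) (x : X) :
    Fintype.card X • ∑ g : G, f (g • x) = Fintype.card G • ∑ y, f y := by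
  have h_indep : ∀ y : X, ∑ g : G, f (g • y) = ∑ g : G, f (g • x) := by
    intro y
    obtain ⟨h, rfl⟩ := exists_smul_eq G x y
    simpa only [Equiv.coe_mulRight, mul_smul] using
      Equiv.sum_comp (Equiv.mulRight h) fun g => f (g • x)
  calc Fintype.card X • ∑ g : G, f (g • x) = ∑ y : X, ∑ g : G, f (g • y) := by
        simp only [h_indep, Finset.sum_const, Finset.card_univ]
    _ = ∑ g : G, ∑ y, f (g • y) := Finset.sum_comm
    _ = ∑ _g : G, ∑ y, f y := Finset.sum_congr rfl fun g _ => (MulAction.bijective g).sum_comp f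
    _ = Fintype.card G • ∑ y, f y := by simp only [Finset.sum_const, Finset.card_univ]

end MulAction

namespace ProbabilityTheory

variable {Ω : Type*} {mΩ : MeasurableSpace Ω} {P : Measure Ω}

theorem iIndepFun.curry {ι κ 𝓧 : Type*} [MeasurableSpace 𝓧] {X : ι → κ → Ω → 𝓧}
    (mX : ∀ i j, Measurable (X i j)) (h : iIndepFun (fun p : ι × κ => X p.1 p.2) P) :
    iIndepFun (fun i ω j => X i j ω) P := by
  have := h.isProbabilityMeasure
  have := fun i j => Measure.isProbabilityMeasure_map (μ := P) (mX i j).aemeasurable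
  have h_row : ∀ i, P.map (fun ω j => X i j ω) = Measure.infinitePi fun j => P.map (X i j) :=
    fun i => (h.precomp (Prod.mk_right_injective i)).map_fun_eq_infinitePi_map fun j => mX i j
  have h_all : P.map (fun ω (p : ι × κ) => X p.1 p.2 ω) =
      Measure.infinitePi fun p => P.map (X p.1 p.2) :=
    h.map_fun_eq_infinitePi_map fun p => mX p.1 p.2
  rw [iIndepFun_iff_map_fun_eq_infinitePi_map (by fun_prop)]
  simp only [h_row]
  rw [← Measure.infinitePi_map_curry fun i j => P.map (X i j), ← h_all,
    Measure.map_map (by fun_prop) (by fun_prop)]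
  rfl

theorem iIndepFun.integral_comp_eq_integral_pi {α ι 𝒵 E : Type*} [Fintype ι]
    [MeasurableSpace 𝒵] [NormedAddCommGroup E] [NormedSpace ℝ E] {Z : α → Ω → 𝒵} {ν : Measure 𝒵}
    (hZ : ∀ a, Measurable (Z a)) (h : iIndepFun Z P) (hlaw : ∀ a, P.map (Z a) = ν)
    {g : ι → α} (hg : g.Injective) {F : (ι → 𝒵) → E}
    (hF : AEStronglyMeasurable F (Measure.pi fun _ => ν)) :
    ∫ ω, F (fun i => Z (g i) ω) ∂P = ∫ x, F x ∂(Measure.pi fun _ => ν) := by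
  have h_law : P.map (fun ω i => Z (g i) ω) = Measure.pi fun _ => ν := by
    rw [(h.precomp hg).map_fun_eq_pi_map fun i => (hZ (g i)).aemeasurable]
    simp only [hlaw]
  rw [← h_law] at hF ⊢
  exact (integral_map (by fun_prop) hF).symm

theorem mgf_le_one_sub_add_mul_exp [IsProbabilityMeasure P] {X : Ω → ℝ} (hX : AEMeasurable X P)
    (h01 : ∀ᵐ ω ∂P, X ω ∈ Set.Icc (0 : ℝ) 1) (t : ℝ) :
    mgf X P t ≤ 1 - P[X] + P[X] * Real.exp t := by
  have h_chord : ∀ x ∈ Set.Icc (0 : ℝ) 1, Real.exp (t * x) ≤ 1 - x + x * Real.exp t := by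
    rintro x ⟨hx0, hx1⟩
    simpa [smul_eq_mul, mul_comm] using
      convexOn_exp.2 (Set.mem_univ 0) (Set.mem_univ t) (sub_nonneg.2 hx1) hx0 (by ring)
  have hX_int : Integrable X P := .of_mem_Icc 0 1 hX h01
  have h_sub : Integrable (fun ω => 1 - X ω) P := (integrable_const 1).sub hX_int
  calc mgf X P t ≤ ∫ ω, (1 - X ω + X ω * Real.exp t) ∂P :=
        integral_mono_ae (integrable_exp_mul_of_mem_Icc hX h01)
          (h_sub.add (hX_int.mul_const _))
          (h01.mono fun ω hω => h_chord _ hω)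
    _ = 1 - P[X] + P[X] * Real.exp t := by
        rw [integral_add h_sub (hX_int.mul_const _),
          integral_sub (integrable_const 1) hX_int, integral_mul_const]
        simp

end ProbabilityTheory

theorem Real.exp_inv_card_mul_sum_le {ι : Type*} [Fintype ι] [Nonempty ι] (a : ι → ℝ) :
    Real.exp ((Fintype.card ι : ℝ)⁻¹ * ∑ i, a i) ≤
      (Fintype.card ι : ℝ)⁻¹ * ∑ i, Real.exp (a i) := by
  have h_card : (0 : ℝ) < Fintype.card ι := by exact_mod_cast Fintype.card_pos
  simpa [smul_eq_mul, Finset.mul_sum] using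
    convexOn_exp.map_sum_le (t := Finset.univ) (w := fun _ => (Fintype.card ι : ℝ)⁻¹) (p := a)
      (fun _ _ => by positivity) (by simp [h_card.ne']) (fun _ _ => Set.mem_univ _)

namespace TransferUQ

variable {Ω 𝒵 : Type*} {n k : ℕ} {φ : (Fin k → 𝒵) → ℝ} {Z : Fin n → Ω → 𝒵}

theorem Ustat_eq_inv_factorial_mul_sum_perm (e : Fin k ↪ Fin n) (ω : Ω) :
    Ustat n k φ Z ω =
      (n.factorial : ℝ)⁻¹ * ∑ σ : Equiv.Perm (Fin n), φ (fun i => Z (σ (e i)) ω) := by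
  have := Equiv.Perm.isMultiplyPretransitive (Fin n) k
  have hkn : k ≤ n := by simpa using Fintype.card_le_of_embedding e
  have h_avg := MulAction.card_nsmul_sum_smul_eq (G := Equiv.Perm (Fin n))
    (fun f : Fin k ↪ Fin n => φ (fun i => Z (f i) ω)) e
  simp only [Fintype.card_embedding_eq, Fintype.card_perm, Fintype.card_fin, nsmul_eq_mul,
    Function.Embedding.smul_apply, Equiv.Perm.smul_def] at h_avg
  have h_fact : ((n - k).factorial : ℝ) * n.descFactorial k = n.factorial := by
    exact_mod_cast Nat.factorial_mul_descFactorial hkn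
  rw [Ustat, Fintype.sum_equiv (Equiv.subtypeInjectiveEquivEmbedding (Fin k) (Fin n))
    (fun g : Tup k n => φ (fun i => Z (g.1 i) ω)) (fun f => φ (fun i => Z (f i) ω)) fun _ => rfl]
  have h_n : (n.factorial : ℝ) ≠ 0 := by positivity
  field_simp
  apply mul_left_cancel₀ h_n
  linear_combination (-((n - k).factorial : ℝ)) * h_avg +
    (∑ σ : Equiv.Perm (Fin n), φ (fun i => Z (σ (e i)) ω)) * h_fact

theorem Ustat_mem_Icc (hkn : k ≤ n) (hφ01 : ∀ v, φ v ∈ Set.Icc (0 : ℝ) 1) (ω : Ω) :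
    Ustat n k φ Z ω ∈ Set.Icc (0 : ℝ) 1 := by
  rw [Ustat_eq_inv_factorial_mul_sum_perm (Fin.castLEEmb hkn)]
  have h_sum_le : ∑ σ : Equiv.Perm (Fin n), φ (fun i => Z (σ (Fin.castLEEmb hkn i)) ω) ≤
      n.factorial := by
    simpa [Fintype.card_perm] using
      Finset.sum_le_sum (s := Finset.univ) (g := fun _ => (1 : ℝ))
        fun (σ : Equiv.Perm (Fin n)) _ => (hφ01 (fun i => Z (σ (Fin.castLEEmb hkn i)) ω)).2
  refine ⟨mul_nonneg (by positivity) (Finset.sum_nonneg fun σ _ => (hφ01 _).1), ?_⟩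
  rwa [inv_mul_le_one₀ (by positivity)]

theorem measurable_Ustat [MeasurableSpace Ω] [MeasurableSpace 𝒵]
    (hZ : ∀ i, Measurable (Z i)) (hφ : Measurable φ) : Measurable (Ustat n k φ Z) := by
  unfold Ustat
  fun_prop

def blockSum {m : ℕ} (φ : (Fin k → 𝒵) → ℝ) (b : Fin m × Fin k ↪ Fin n) (x : Fin n → 𝒵) :
    ℝ :=
  ∑ j, φ (fun i => x (b (j, i)))

theorem natCast_mul_Ustat_eq {m : ℕ} (b : Fin m × Fin k ↪ Fin n) (ω : Ω) :
    (m : ℝ) * Ustat n k φ Z ω =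
      (n.factorial : ℝ)⁻¹ * ∑ σ : Equiv.Perm (Fin n), blockSum φ b (fun i => Z (σ i) ω) := by
  have h_block (j : Fin m) := Ustat_eq_inv_factorial_mul_sum_perm (φ := φ) (Z := Z)
    ((Function.Embedding.sectR j (Fin k)).trans b) ω
  simp only [Function.Embedding.trans_apply, Function.Embedding.sectR_apply] at h_block
  calc (m : ℝ) * Ustat n k φ Z ω = ∑ j : Fin m, Ustat n k φ Z ω := by simp
    _ = ∑ j : Fin m, (n.factorial : ℝ)⁻¹ *
          ∑ σ : Equiv.Perm (Fin n), φ (fun i => Z (σ (b (j, i))) ω) :=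
        Finset.sum_congr rfl fun j _ => h_block j
    _ = _ := by rw [← Finset.mul_sum, Finset.sum_comm]; rfl

theorem blockSum_mem_Icc {m : ℕ} (hφ01 : ∀ v, φ v ∈ Set.Icc (0 : ℝ) 1)
    (b : Fin m × Fin k ↪ Fin n) (x : Fin n → 𝒵) : blockSum φ b x ∈ Set.Icc (0 : ℝ) m := by
  refine ⟨Finset.sum_nonneg fun j _ => (hφ01 _).1, ?_⟩
  simpa [blockSum] using Finset.sum_le_sum (s := Finset.univ) (g := fun _ => (1 : ℝ))
    fun (j : Fin m) _ => (hφ01 (fun i => x (b (j, i)))).2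

section Sample

variable [MeasurableSpace Ω] [MeasurableSpace 𝒵] {P : Measure Ω} {ν : Measure 𝒵}

theorem integral_Ustat (hZ : ∀ i, Measurable (Z i)) (hindep : iIndepFun Z P)
    (hlaw : ∀ i, P.map (Z i) = ν) (hφ : Measurable φ) (hφ01 : ∀ v, φ v ∈ Set.Icc (0 : ℝ) 1)
    (hkn : k ≤ n) :
    ∫ ω, Ustat n k φ Z ω ∂P = ∫ v, φ v ∂(Measure.pi fun _ => ν) := by
  have := hindep.isProbabilityMeasure
  let e := Fin.castLEEmb hkn
  have h_term (σ : Equiv.Perm (Fin n)) : ∫ ω, φ (fun i => Z (σ (e i)) ω) ∂P =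
      ∫ v, φ v ∂(Measure.pi fun _ => ν) :=
    hindep.integral_comp_eq_integral_pi hZ hlaw (σ.injective.comp e.injective)
      hφ.aestronglyMeasurable
  simp_rw [Ustat_eq_inv_factorial_mul_sum_perm e]
  rw [integral_const_mul, integral_finsetSum _ fun σ _ =>
    Integrable.of_mem_Icc 0 1 (by fun_prop) (ae_of_all _ fun ω => hφ01 _)]
  simp [h_term, Fintype.card_perm, Nat.factorial_ne_zero]

theorem mgf_natCast_mul_Ustat_le_mgf_blockSum (hZ : ∀ i, Measurable (Z i))
    (hindep : iIndepFun Z P) (hlaw : ∀ i, P.map (Z i) = ν) (hφ : Measurable φ)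
    (hφ01 : ∀ v, φ v ∈ Set.Icc (0 : ℝ) 1) {m : ℕ} (b : Fin m × Fin k ↪ Fin n) (t : ℝ) :
    mgf (Ustat n k φ Z) P (m * t) ≤ mgf (fun ω => blockSum φ b (fun i => Z i ω)) P t := by
  have := hindep.isProbabilityMeasure
  have h_meas : Measurable (blockSum φ b) := by unfold blockSum; fun_prop
  have h_int (σ : Equiv.Perm (Fin n)) :
      Integrable (fun ω => Real.exp (t * blockSum φ b (fun i => Z (σ i) ω))) P :=
    integrable_exp_mul_of_mem_Icc (by fun_prop)
      (ae_of_all _ fun ω => blockSum_mem_Icc hφ01 b _)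
  have h_exch (g : Fin n → Fin n) (hg : g.Injective) :
      ∫ ω, Real.exp (t * blockSum φ b (fun i => Z (g i) ω)) ∂P =
        ∫ x, Real.exp (t * blockSum φ b x) ∂(Measure.pi fun _ => ν) :=
    hindep.integral_comp_eq_integral_pi hZ hlaw hg
      (h_meas.const_mul t).exp.aestronglyMeasurable
  have h_card : (Fintype.card (Equiv.Perm (Fin n)) : ℝ) = n.factorial := by
    simp [Fintype.card_perm]
  calc mgf (Ustat n k φ Z) P (m * t)
      = ∫ ω, Real.exp ((n.factorial : ℝ)⁻¹ *
          ∑ σ : Equiv.Perm (Fin n), t * blockSum φ b (fun i => Z (σ i) ω)) ∂P := by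
        refine integral_congr_ae (ae_of_all _ fun ω => ?_)
        simp only
        rw [mul_comm (m : ℝ) t, mul_assoc, natCast_mul_Ustat_eq b ω, ← Finset.mul_sum]
        ring_nf
    _ ≤ ∫ ω, (n.factorial : ℝ)⁻¹ *
          ∑ σ : Equiv.Perm (Fin n), Real.exp (t * blockSum φ b (fun i => Z (σ i) ω)) ∂P :=
        integral_mono_of_nonneg (ae_of_all _ fun _ => (Real.exp_pos _).le)
          ((integrable_finsetSum _ fun σ _ => h_int σ).const_mul _)
          (ae_of_all _ fun ω => h_card ▸ Real.exp_inv_card_mul_sum_le _)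
    _ = ∫ x, Real.exp (t * blockSum φ b x) ∂(Measure.pi fun _ => ν) := by
        rw [integral_const_mul, integral_finsetSum _ fun σ _ => h_int σ]
        simp [h_exch _ (Equiv.injective _), Fintype.card_perm, Nat.factorial_ne_zero]
    _ = mgf (fun ω => blockSum φ b (fun i => Z i ω)) P t :=
        (h_exch id Function.injective_id).symm

theorem mgf_blockSum (hZ : ∀ i, Measurable (Z i)) (hindep : iIndepFun Z P)
    (hlaw : ∀ i, P.map (Z i) = ν) (hφ : Measurable φ) {m : ℕ} (b : Fin m × Fin k ↪ Fin n)
    (t : ℝ) :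
    mgf (fun ω => blockSum φ b (fun i => Z i ω)) P t = mgf φ (Measure.pi fun _ => ν) t ^ m := by
  have h_blocks : iIndepFun (fun j ω => φ (fun i => Z (b (j, i)) ω)) P :=
    ((hindep.precomp b.injective).curry fun j i => hZ _).comp (fun _ => φ) fun _ => hφ
  have h_fn : (fun ω => blockSum φ b (fun i => Z i ω)) =
      ∑ j, fun ω => φ (fun i => Z (b (j, i)) ω) := by
    ext ω
    simp [blockSum]
  have h_block (j : Fin m) : mgf (fun ω => φ (fun i => Z (b (j, i)) ω)) P t =
      mgf φ (Measure.pi fun _ => ν) t :=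
    hindep.integral_comp_eq_integral_pi hZ hlaw (b.injective.comp (Prod.mk_right_injective j))
      (hφ.const_mul t).exp.aestronglyMeasurable
  rw [h_fn, h_blocks.mgf_sum (fun j => by fun_prop)]
  simp [h_block]

theorem mgf_natCast_mul_Ustat_le [IsProbabilityMeasure ν] (hZ : ∀ i, Measurable (Z i))
    (hindep : iIndepFun Z P) (hlaw : ∀ i, P.map (Z i) = ν) (hφ : Measurable φ)
    (hφ01 : ∀ v, φ v ∈ Set.Icc (0 : ℝ) 1) {m : ℕ} (b : Fin m × Fin k ↪ Fin n) (t : ℝ) :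
    mgf (Ustat n k φ Z) P (m * t) ≤
      (1 - ∫ v, φ v ∂(Measure.pi fun _ => ν) +
        (∫ v, φ v ∂(Measure.pi fun _ => ν)) * Real.exp t) ^ m := by
  calc mgf (Ustat n k φ Z) P (m * t)
      ≤ mgf (fun ω => blockSum φ b (fun i => Z i ω)) P t :=
        mgf_natCast_mul_Ustat_le_mgf_blockSum hZ hindep hlaw hφ hφ01 b t
    _ = mgf φ (Measure.pi fun _ => ν) t ^ m := mgf_blockSum hZ hindep hlaw hφ b t
    _ ≤ _ := pow_le_pow_left₀ mgf_nonneg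
        (mgf_le_one_sub_add_mul_exp hφ.aemeasurable (ae_of_all _ hφ01) t) m

end Sample

theorem h1_of_ne_of_ne {y μ : ℝ} (hy0 : y ≠ 0) (hy1 : y ≠ 1) :
    h1 y μ = y * Real.log (y / μ) + (1 - y) * Real.log ((1 - y) / (1 - μ)) := by
  simp [h1, hy0, hy1]

theorem h1_self {μ : ℝ} (hμ0 : 0 < μ) (hμ1 : μ < 1) : h1 μ μ = 0 := by
  rw [h1_of_ne_of_ne hμ0.ne' hμ1.ne, div_self hμ0.ne', div_self (sub_ne_zero.2 hμ1.ne')]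
  simp

theorem measureReal_le_le_exp_neg_mul_h1 [MeasurableSpace Ω] {P : Measure Ω}
    [IsProbabilityMeasure P] {X : Ω → ℝ} (hX : AEMeasurable X P)
    (h01 : ∀ᵐ ω ∂P, X ω ∈ Set.Icc (0 : ℝ) 1) {m : ℕ} {x μ : ℝ} (hx : 0 < x) (hxμ : x < μ)
    (hμ : μ < 1) (hmgf : ∀ t ≤ 0, mgf X P (m * t) ≤ (1 - μ + μ * Real.exp t) ^ m) :
    P.real {ω | X ω ≤ x} ≤ Real.exp (-m * h1 x μ) := by
  have hμ0 : 0 < μ := hx.trans hxμ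
  have h_odds : 0 < (1 - μ) / (1 - x) := div_pos (by linarith) (by linarith)
  -- the minimiser of `t ↦ -t x + log (1 - μ + μ eᵗ)`
  set s := Real.log (x / μ) + Real.log ((1 - μ) / (1 - x)) with hs_def
  have hs : s ≤ 0 := by
    have := Real.log_neg (div_pos hx hμ0) ((div_lt_one hμ0).2 hxμ)
    have := Real.log_neg h_odds ((div_lt_one (by linarith)).2 (by linarith))
    linarith
  have h_mgf_s : 1 - μ + μ * Real.exp s = (1 - μ) / (1 - x) := by
    have : 1 - x ≠ 0 := by linarith
    rw [hs_def, Real.exp_add, Real.exp_log (div_pos hx hμ0), Real.exp_log h_odds]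
    field_simp
    ring
  have h_h1 : h1 x μ = s * x - Real.log ((1 - μ) / (1 - x)) := by
    rw [h1_of_ne_of_ne hx.ne' (by linarith), ← inv_div (1 - μ), Real.log_inv]
    ring
  calc P.real {ω | X ω ≤ x} ≤ Real.exp (-(m * s) * x) * mgf X P (m * s) :=
        measure_le_le_exp_mul_mgf x (mul_nonpos_of_nonneg_of_nonpos (Nat.cast_nonneg m) hs)
          (integrable_exp_mul_of_mem_Icc hX h01)
    _ ≤ Real.exp (-(m * s) * x) * ((1 - μ) / (1 - x)) ^ m := by
        gcongr
        rw [← h_mgf_s]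
        exact hmgf s hs
    _ = Real.exp (-(m * s) * x) * Real.exp (m * Real.log ((1 - μ) / (1 - x))) := by
        rw [Real.exp_nat_mul, Real.exp_log h_odds]
    _ = Real.exp (-m * h1 x μ) := by
        rw [← Real.exp_add, h_h1]
        ring_nf

end TransferUQ

theorem ustatistic_hoeffding_general
    {Ω : Type*} [MeasurableSpace Ω] (P : Measure Ω) [IsProbabilityMeasure P]
    {𝒵 : Type*} [MeasurableSpace 𝒵] (ν : Measure 𝒵) [IsProbabilityMeasure ν]
    (n k : ℕ)
    (Z : Fin n → Ω → 𝒵) (hZmeas : ∀ i, Measurable (Z i))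
    (hindep : iIndepFun Z P)
    (hlaw : ∀ i, P.map (Z i) = ν)
    (φ : (Fin k → 𝒵) → ℝ) (hφmeas : Measurable φ) (hφ01 : ∀ v, φ v ∈ Set.Icc (0:ℝ) 1)
    (hμ : (∫ ω, TransferUQ.Ustat n k φ Z ω ∂P) ∈ Set.Ioo (0:ℝ) 1)
    (x : ℝ) (hx : x ∈ Set.Ioo (0:ℝ) 1) :
    P {ω | TransferUQ.Ustat n k φ Z ω ≤ x} ≤
      ENNReal.ofReal (Real.exp (-((n / k : ℕ) : ℝ) *
        TransferUQ.h1 (min x (∫ ω, TransferUQ.Ustat n k φ Z ω ∂P))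
          (∫ ω, TransferUQ.Ustat n k φ Z ω ∂P))) := by
  set μ := ∫ ω, TransferUQ.Ustat n k φ Z ω ∂P with hμ_def
  rcases le_or_gt μ x with hμx | hxμ
  · rw [min_eq_right hμx, TransferUQ.h1_self hμ.1 hμ.2, mul_zero, Real.exp_zero, ENNReal.ofReal_one]
    exact prob_le_one
  rcases Nat.eq_zero_or_pos (n / k) with hm | hm
  · rw [hm, Nat.cast_zero, neg_zero, zero_mul, Real.exp_zero, ENNReal.ofReal_one]
    exact prob_le_one
  have hkn : k ≤ n := (Nat.div_pos_iff.1 hm).2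
  rw [min_eq_left hxμ.le, ← ofReal_measureReal]
  refine ENNReal.ofReal_le_ofReal (TransferUQ.measureReal_le_le_exp_neg_mul_h1
    (TransferUQ.measurable_Ustat hZmeas hφmeas).aemeasurable
    (ae_of_all _ (TransferUQ.Ustat_mem_Icc hkn hφ01)) hx.1 hxμ hμ.2 fun t _ => ?_)
  rw [hμ_def, TransferUQ.integral_Ustat hZmeas hindep hlaw hφmeas hφ01 hkn]
  exact TransferUQ.mgf_natCast_mul_Ustat_le hZmeas hindep hlaw hφmeas hφ01
    (finProdFinEquiv.toEmbedding.trans (Fin.castLEEmb (Nat.div_mul_le_self n k))) t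

/-- **Hoeffding inequality for U-statistics.** If `Z_1,…,Z_n` are i.i.d., `φ` takes values in
`[0,1]`, `U` is the U-statistic of degree `k` with kernel `φ`, `μ = E[U] ∈ (0,1)` and
`m = ⌊n/k⌋`, then `P(U ≤ x) ≤ exp(−m·h₁(min(x,μ); μ))` for all `x ∈ (0,1)`. -/
theorem ustatistic_hoeffding
    {Ω : Type*} [MeasurableSpace Ω] (P : Measure Ω) [IsProbabilityMeasure P]
    {𝒵 : Type*} [MeasurableSpace 𝒵] (ν : Measure 𝒵) [IsProbabilityMeasure ν]
    (n k : ℕ) (hk : 1 ≤ k) (hkn : k ≤ n)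
    (Z : Fin n → Ω → 𝒵) (hZmeas : ∀ i, Measurable (Z i))
    (hindep : iIndepFun Z P)
    (hlaw : ∀ i, P.map (Z i) = ν)
    (φ : (Fin k → 𝒵) → ℝ) (hφmeas : Measurable φ) (hφ01 : ∀ v, φ v ∈ Set.Icc (0:ℝ) 1)
    (hμ : (∫ ω, TransferUQ.Ustat n k φ Z ω ∂P) ∈ Set.Ioo (0:ℝ) 1)
    (x : ℝ) (hx : x ∈ Set.Ioo (0:ℝ) 1) :
    P {ω | TransferUQ.Ustat n k φ Z ω ≤ x} ≤
      ENNReal.ofReal (Real.exp (-((n / k : ℕ) : ℝ) *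
        TransferUQ.h1 (min x (∫ ω, TransferUQ.Ustat n k φ Z ω ∂P))
          (∫ ω, TransferUQ.Ustat n k φ Z ω ∂P))) :=
  ustatistic_hoeffding_general P ν n k Z hZmeas hindep hlaw φ hφmeas hφ01 hμ x hx
end

section
/- (Jensen comparison of a U-statistic with its independent-block average.) Let ψ : ℝ → ℝ be a convex function. Then E[ ψ(U) ] ≤ E[ ψ( W ) ], where W = (1/m) · Σ_{j=1}^{m} φ( Z_{(j−1)k+1}, …, Z_{jk} ) is the average of the kernel over the first m disjoint consecutive blocks of k of the variables Z_1,…,Z_n. -/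
/-!
Relabelling the sample by a permutation `σ` and averaging the block average `W ∘ σ` over all
`n!` permutations gives back `U`: every injective `k`-tuple of indices is the image of each of
the `m` blocks under exactly `(n-k)!` permutations. Jensen's inequality then bounds `ψ(U)` by
the average of the `ψ(W ∘ σ)`, and since an i.i.d. sample is exchangeable, every `W ∘ σ` has the
law of `W`.
-/

open MeasureTheory ProbabilityTheory

/-- For `j < ⌊n/k⌋` and `i < k`, the (0-based) index `j·k + i` of the `i`-th element of the
`j`-th consecutive block of `k` indices is less than `n`. -/
theorem TransferUQ.block_index_lt {n k : ℕ} (j : Fin (n / k)) (i : Fin k) :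
    j.val * k + i.val < n := by
  have h1 : j.val * k + i.val < (j.val + 1) * k := by
    rw [Nat.succ_mul]; omega
  have h2 : (j.val + 1) * k ≤ (n / k) * k := Nat.mul_le_mul_right k j.isLt
  exact lt_of_lt_of_le h1 (le_trans h2 (Nat.div_mul_le_self n k))

open Function

section PermutationCounting

variable {α β : Type*} [Fintype α] [Fintype β] [DecidableEq β]

theorem card_perm_comp_eq {e g : α → β} (he : Injective e) (hg : Injective g) :
    Fintype.card {σ : Equiv.Perm β // ⇑σ ∘ e = g} =
      (Fintype.card β - Fintype.card α).factorial := by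
  classical
  -- `σ` is forced on `range e`; off it, it is any bijection `(range e)ᶜ ≃ (range g)ᶜ`.
  let e₀ : Set.range e ≃ Set.range g :=
    (Equiv.ofInjective e he).symm.trans (Equiv.ofInjective g hg)
  have card_compl {h : α → β} (hh : Injective h) :
      Fintype.card ((Set.range h)ᶜ : Set β) = Fintype.card β - Fintype.card α := by
    rw [Fintype.card_compl_set, Set.card_range_of_injective hh]
  have extends_e₀ : {σ : Equiv.Perm β // ⇑σ ∘ e = g} ≃
      {σ : Equiv.Perm β // ∀ x : Set.range e, σ x = e₀ x} := by
    refine Equiv.subtypeEquivRight fun σ => ⟨?_, fun h => funext fun i => ?_⟩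
    · rintro rfl ⟨x, i, rfl⟩
      simp [e₀]
    · simpa [e₀] using h ⟨e i, i, rfl⟩
  rw [Fintype.card_congr (extends_e₀.trans (Equiv.Set.compl e₀)),
    Fintype.card_equiv (Fintype.equivOfCardEq ((card_compl he).trans (card_compl hg).symm)),
    card_compl he]

theorem sum_perm_comp_eq [DecidableEq α] {M : Type*} [AddCommMonoid M] {e : α → β}
    (he : Injective e) (F : {g : α → β // Injective g} → M) :
    ∑ σ : Equiv.Perm β, F ⟨σ ∘ e, σ.injective.comp he⟩ =
      (Fintype.card β - Fintype.card α).factorial • ∑ g, F g := by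
  rw [← Fintype.sum_fiberwise (fun σ : Equiv.Perm β => (⟨σ ∘ e, σ.injective.comp he⟩ :
    {g : α → β // Injective g})), Finset.smul_sum]
  refine Fintype.sum_congr _ _ fun g => ?_
  rw [Fintype.sum_congr _ (fun _ => F g) fun σ => congrArg F σ.2, Finset.sum_const,
    Finset.card_univ, ← card_perm_comp_eq he g.2]
  exact congrArg (· • F g)
    (Fintype.card_congr (Equiv.subtypeEquivRight fun σ => Subtype.ext_iff))

end PermutationCounting

theorem ConvexOn.integral_comp_sum_le {Ω E ι : Type*} [MeasurableSpace Ω] {μ : Measure Ω}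
    [AddCommGroup E] [Module ℝ E] {S : Set E} {ψ : E → ℝ} (hψ : ConvexOn ℝ S ψ)
    {s : Finset ι} {w : ι → ℝ} (hw₀ : ∀ i ∈ s, 0 ≤ w i) (hw₁ : ∑ i ∈ s, w i = 1)
    {f : ι → Ω → E} (hfS : ∀ i ∈ s, ∀ ω, f i ω ∈ S)
    (hint : ∀ i ∈ s, Integrable (fun ω => ψ (f i ω)) μ)
    (hint_sum : Integrable (fun ω => ψ (∑ i ∈ s, w i • f i ω)) μ) :
    ∫ ω, ψ (∑ i ∈ s, w i • f i ω) ∂μ ≤ ∑ i ∈ s, w i * ∫ ω, ψ (f i ω) ∂μ := by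
  calc ∫ ω, ψ (∑ i ∈ s, w i • f i ω) ∂μ ≤ ∫ ω, ∑ i ∈ s, w i * ψ (f i ω) ∂μ :=
        integral_mono hint_sum (integrable_finsetSum _ fun i hi => (hint i hi).const_mul _)
          fun ω => hψ.map_sum_le hw₀ hw₁ fun i hi => hfS i hi ω
    _ = ∑ i ∈ s, w i * ∫ ω, ψ (f i ω) ∂μ := by
        rw [integral_finsetSum _ fun i hi => (hint i hi).const_mul _]
        simp only [integral_const_mul]

theorem Continuous.integrable_comp_of_mem_Icc {Ω : Type*} [MeasurableSpace Ω] {μ : Measure Ω}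
    [IsFiniteMeasure μ] {ψ : ℝ → ℝ} (hψ : Continuous ψ) {f : Ω → ℝ} (hf : Measurable f)
    {a b : ℝ} (hab : ∀ ω, f ω ∈ Set.Icc a b) : Integrable (fun ω => ψ (f ω)) μ := by
  obtain ⟨C, hC⟩ := isCompact_Icc.exists_bound_of_continuousOn hψ.continuousOn
  exact .of_bound (hψ.measurable.comp hf).aestronglyMeasurable C
    (.of_forall fun ω => hC _ (hab ω))

theorem ProbabilityTheory.iIndepFun.identDistrib_perm {Ω ι 𝒵 : Type*} [MeasurableSpace Ω]
    {P : Measure Ω} [Fintype ι] [MeasurableSpace 𝒵] {Z : ι → Ω → 𝒵}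
    (hZ : ∀ i, Measurable (Z i)) (hindep : iIndepFun Z P)
    (hident : ∀ i j, P.map (Z i) = P.map (Z j)) (σ : Equiv.Perm ι) :
    IdentDistrib (fun ω i => Z (σ i) ω) (fun ω i => Z i ω) P P where
  aemeasurable_fst := (measurable_pi_lambda _ fun i => hZ (σ i)).aemeasurable
  aemeasurable_snd := (measurable_pi_lambda _ hZ).aemeasurable
  map_eq := by
    rw [(hindep.precomp σ.injective).map_fun_eq_pi_map fun i => (hZ (σ i)).aemeasurable,
      hindep.map_fun_eq_pi_map fun i => (hZ i).aemeasurable]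
    exact congrArg Measure.pi (funext fun i => hident (σ i) i)

namespace TransferUQ

variable {𝒵 : Type*}

def blockIndex {n k : ℕ} (j : Fin (n / k)) (i : Fin k) : Fin n :=
  ⟨j.val * k + i.val, block_index_lt j i⟩

theorem blockIndex_injective {n k : ℕ} (j : Fin (n / k)) : Injective (blockIndex (n := n) j) :=
  fun a b h => Fin.ext (by simpa [blockIndex] using congrArg Fin.val h)

noncomputable def blockAverage (n k : ℕ) (φ : (Fin k → 𝒵) → ℝ) (x : Fin n → 𝒵) : ℝ :=
  (1 / ((n / k : ℕ) : ℝ)) * ∑ j : Fin (n / k), φ (fun i => x (blockIndex j i))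

theorem measurable_blockAverage [MeasurableSpace 𝒵] {n k : ℕ} {φ : (Fin k → 𝒵) → ℝ}
    (hφ : Measurable φ) : Measurable (blockAverage n k φ) := by
  unfold blockAverage
  fun_prop

theorem blockAverage_mem_Icc {n k : ℕ} {φ : (Fin k → 𝒵) → ℝ}
    (hφ : ∀ v, φ v ∈ Set.Icc (0 : ℝ) 1) (x : Fin n → 𝒵) :
    blockAverage n k φ x ∈ Set.Icc (0 : ℝ) 1 := by
  have hsum_le : ∑ j : Fin (n / k), φ (fun i => x (blockIndex j i)) ≤ ((n / k : ℕ) : ℝ) := by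
    simpa using Finset.sum_le_sum fun j (_ : j ∈ Finset.univ) =>
      (hφ (fun i => x (blockIndex j i))).2
  refine ⟨mul_nonneg (by positivity) (Finset.sum_nonneg fun j _ => (hφ _).1), ?_⟩
  calc blockAverage n k φ x ≤ 1 / ((n / k : ℕ) : ℝ) * ((n / k : ℕ) : ℝ) :=
        mul_le_mul_of_nonneg_left hsum_le (by positivity)
    _ ≤ 1 := by rcases eq_or_ne ((n / k : ℕ) : ℝ) 0 with h | h <;> simp [h]

theorem Ustat_eq_sum_perm {Ω : Type*} {n k : ℕ} (hm : n / k ≠ 0) (φ : (Fin k → 𝒵) → ℝ)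
    (Z : Fin n → Ω → 𝒵) (ω : Ω) :
    Ustat n k φ Z ω =
      ∑ σ : Equiv.Perm (Fin n),
        (n.factorial : ℝ)⁻¹ • blockAverage n k φ (fun i => Z (σ i) ω) := by
  have hblocks : ∑ σ : Equiv.Perm (Fin n), ∑ j : Fin (n / k),
      φ (fun i => Z (σ (blockIndex j i)) ω) =
        (n / k) • (n - k).factorial • ∑ g : Tup k n, φ (fun i => Z (g.val i) ω) := by
    have hblock (j : Fin (n / k)) := sum_perm_comp_eq (blockIndex_injective j)
      fun g : Tup k n => φ (fun i => Z (g.val i) ω)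
    simp only [Fintype.card_fin, Function.comp_apply] at hblock
    rw [Finset.sum_comm, Fintype.sum_congr _ _ hblock, Finset.sum_const, Finset.card_univ,
      Fintype.card_fin]
  simp only [blockAverage, smul_eq_mul, ← Finset.mul_sum]
  rw [hblocks, Ustat, nsmul_eq_mul, nsmul_eq_mul]
  field_simp

end TransferUQ

theorem ustatistic_jensen_block_average_general
    {Ω : Type*} [MeasurableSpace Ω] (P : Measure Ω) [IsProbabilityMeasure P]
    {𝒵 : Type*} [MeasurableSpace 𝒵] (ν : Measure 𝒵)
    (n k : ℕ) (hk : 1 ≤ k) (hkn : k ≤ n)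
    (Z : Fin n → Ω → 𝒵) (hZmeas : ∀ i, Measurable (Z i))
    (hindep : iIndepFun Z P)
    (hlaw : ∀ i, P.map (Z i) = ν)
    (φ : (Fin k → 𝒵) → ℝ) (hφmeas : Measurable φ) (hφ01 : ∀ v, φ v ∈ Set.Icc (0:ℝ) 1)
    (ψ : ℝ → ℝ) (hψ : ConvexOn ℝ Set.univ ψ) :
    (∫ ω, ψ (TransferUQ.Ustat n k φ Z ω) ∂P) ≤
      ∫ ω, ψ ((1 / ((n / k : ℕ) : ℝ)) * ∑ j : Fin (n / k),
        φ (fun i : Fin k =>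
          Z ⟨j.val * k + i.val, TransferUQ.block_index_lt j i⟩ ω)) ∂P := by
  let W : Equiv.Perm (Fin n) → Ω → ℝ := fun σ ω =>
    TransferUQ.blockAverage n k φ (fun i => Z (σ i) ω)
  let w : ℝ := (n.factorial : ℝ)⁻¹
  have hψc : Continuous ψ := continuousOn_univ.mp (hψ.continuousOn isOpen_univ)
  have hW01 (σ ω) : W σ ω ∈ Set.Icc (0 : ℝ) 1 := TransferUQ.blockAverage_mem_Icc hφ01 _
  have hWmeas (σ) : Measurable (W σ) :=
    (TransferUQ.measurable_blockAverage hφmeas).comp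
      (measurable_pi_lambda _ fun i => hZmeas (σ i))
  have hw₁ : ∑ _σ : Equiv.Perm (Fin n), w = 1 := by
    simp [w, Fintype.card_perm, n.factorial_ne_zero]
  have hexch (σ) :
      ∫ ω, ψ (W σ ω) ∂P = ∫ ω, ψ (TransferUQ.blockAverage n k φ (fun i => Z i ω)) ∂P :=
    ((hindep.identDistrib_perm hZmeas (fun i j => (hlaw i).trans (hlaw j).symm) σ).comp
      (hψc.measurable.comp (TransferUQ.measurable_blockAverage hφmeas))).integral_eq
  calc ∫ ω, ψ (TransferUQ.Ustat n k φ Z ω) ∂P = ∫ ω, ψ (∑ σ, w • W σ ω) ∂P := by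
        simp_rw [TransferUQ.Ustat_eq_sum_perm (Nat.div_pos hkn (by omega)).ne']
        rfl
    _ ≤ ∑ σ, w * ∫ ω, ψ (W σ ω) ∂P :=
        hψ.integral_comp_sum_le (fun _ _ => by positivity) hw₁ (fun _ _ _ => trivial)
          (fun σ _ => hψc.integrable_comp_of_mem_Icc (hWmeas σ) (hW01 σ))
          (hψc.integrable_comp_of_mem_Icc (by fun_prop) fun ω =>
            (convex_Icc 0 1).sum_mem (fun _ _ => by positivity) hw₁ fun σ _ => hW01 σ ω)
    _ = ∫ ω, ψ (TransferUQ.blockAverage n k φ (fun i => Z i ω)) ∂P := by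
        simp_rw [hexch, ← Finset.sum_mul, hw₁, one_mul]

/-- **Jensen comparison of a U-statistic with its independent-block average.** If `Z_1,…,Z_n`
are i.i.d., `φ` takes values in `[0,1]`, `U` is the U-statistic of degree `k` with kernel `φ`,
`m = ⌊n/k⌋`, and `W = (1/m) ∑_{j=1}^m φ(Z_{(j-1)k+1},…,Z_{jk})` is the average of the kernel
over the first `m` disjoint consecutive blocks of `k` variables, then for every convex
`ψ : ℝ → ℝ`, `E[ψ(U)] ≤ E[ψ(W)]`. -/
theorem ustatistic_jensen_block_average
    {Ω : Type*} [MeasurableSpace Ω] (P : Measure Ω) [IsProbabilityMeasure P]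
    {𝒵 : Type*} [MeasurableSpace 𝒵] (ν : Measure 𝒵) [IsProbabilityMeasure ν]
    (n k : ℕ) (hk : 1 ≤ k) (hkn : k ≤ n)
    (Z : Fin n → Ω → 𝒵) (hZmeas : ∀ i, Measurable (Z i))
    (hindep : iIndepFun Z P)
    (hlaw : ∀ i, P.map (Z i) = ν)
    (φ : (Fin k → 𝒵) → ℝ) (hφmeas : Measurable φ) (hφ01 : ∀ v, φ v ∈ Set.Icc (0:ℝ) 1)
    (ψ : ℝ → ℝ) (hψ : ConvexOn ℝ Set.univ ψ) :
    (∫ ω, ψ (TransferUQ.Ustat n k φ Z ω) ∂P) ≤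
      ∫ ω, ψ ((1 / ((n / k : ℕ) : ℝ)) * ∑ j : Fin (n / k),
        φ (fun i : Fin k =>
          Z ⟨j.val * k + i.val, TransferUQ.block_index_lt j i⟩ ω)) ∂P :=
  ustatistic_jensen_block_average_general P ν n k hk hkn Z hZmeas hindep hlaw φ hφmeas hφ01 ψ hψ
end

section
/- (Self-bounding properties of U-statistics with nonnegative bounded kernels.) Let k ≥ 1 and n ≥ k be integers, 𝒵 any nonempty set, and φ : 𝒵^k → [0,1] any function. For z = (z_1,…,z_n) ∈ 𝒵^n define U(z) = ((n−k)!/n!) · Σ_{(i_1,…,i_k)∈𝕋_{k,n}} φ(z_{i_1},…,z_{i_k}), and for each i ∈ {1,…,n} define U_i(z) = inf_{z'_i ∈ 𝒵} U(z_1,…,z_{i−1}, z'_i, z_{i+1},…,z_n). Then for every z ∈ 𝒵^n and every i: 0 ≤ U(z) − U_i(z) ≤ k/n, and moreover Σ_{i=1}^{n} ( U(z) − U_i(z) )² ≤ (k²/n) · U(z). -/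
/-- The U-statistic of degree `k` with kernel `φ`, as a function of the data
`z = (z_1,…,z_n)`: `U(z) = ((n-k)!/n!) ∑_{(i_1,…,i_k) ∈ 𝕋_{k,n}} φ(z_{i_1},…,z_{i_k})`. -/
noncomputable def TransferUQ.UstatFun {𝒵 : Type*} (n k : ℕ) (φ : (Fin k → 𝒵) → ℝ)
    (z : Fin n → 𝒵) : ℝ :=
  ((n - k).factorial : ℝ) / (n.factorial : ℝ) *
    ∑ g : TransferUQ.Tup k n, φ (fun i => z (g.val i))

/-- `U_i(z) = inf_{z'_i} U(z_1,…,z_{i-1},z'_i,z_{i+1},…,z_n)`. -/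
noncomputable def TransferUQ.UstatLOO {𝒵 : Type*} (n k : ℕ) (φ : (Fin k → 𝒵) → ℝ)
    (z : Fin n → 𝒵) (i : Fin n) : ℝ :=
  ⨅ z' : 𝒵, TransferUQ.UstatFun n k φ (Function.update z i z')

/-!
Split `U(z)` as `A_i(z) + R_i(z)`, where `A_i` collects the tuples of `𝕋_{k,n}` that use the
index `i` and `R_i` the others. Changing `z_i` leaves `R_i` unchanged and `A_i ≥ 0`, so
`0 ≤ U - U_i ≤ A_i`. A fraction `k/n` of all tuples use `i`, so `A_i ≤ k/n`, and every tuple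
uses exactly `k` indices, so `∑ᵢ A_i = k U`. Hence `∑ᵢ (U - U_i)² ≤ (k/n) ∑ᵢ A_i = (k²/n) U`.
-/

open Finset

theorem Finset.sum_sq_le_mul_sum_of_le {ι R : Type*} [CommSemiring R] [PartialOrder R]
    [IsOrderedRing R] (s : Finset ι) {d a : ι → R} {b : R} (hd : ∀ i ∈ s, 0 ≤ d i)
    (hda : ∀ i ∈ s, d i ≤ a i) (hab : ∀ i ∈ s, a i ≤ b) :
    ∑ i ∈ s, d i ^ 2 ≤ b * ∑ i ∈ s, a i := by
  rw [mul_sum]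
  refine sum_le_sum fun i hi => ?_
  have ha : 0 ≤ a i := (hd i hi).trans (hda i hi)
  calc d i ^ 2 = d i * d i := sq (d i)
    _ ≤ a i * d i := mul_le_mul_of_nonneg_right (hda i hi) (hd i hi)
    _ ≤ a i * b := mul_le_mul_of_nonneg_left ((hda i hi).trans (hab i hi)) ha
    _ = b * a i := mul_comm _ _

namespace TransferUQ

theorem card_tup (k n : ℕ) : Fintype.card (Tup k n) = n.descFactorial k := by
  rw [Fintype.card_congr (Equiv.subtypeInjectiveEquivEmbedding _ _), Fintype.card_embedding_eq,
    Fintype.card_fin, Fintype.card_fin]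

section Hitting

variable {k n : ℕ}

def hitting (i : Fin n) : Finset (Tup k n) := {g | ∃ j, g.1 j = i}

theorem mem_compl_hitting {i : Fin n} {g : Tup k n} : g ∈ (hitting i)ᶜ ↔ ∀ j, g.1 j ≠ i := by
  simp [hitting]

theorem card_compl_hitting (i : Fin n) : #(hitting (k := k) i)ᶜ = (n - 1).descFactorial k := by
  let e : {g : Tup k n // g ∈ (hitting i)ᶜ} ≃ (Fin k ↪ {x : Fin n // x ≠ i}) :=
    { toFun g := ⟨fun j => ⟨g.1.1 j, mem_compl_hitting.1 g.2 j⟩,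
        fun a b h => g.1.2 (congrArg Subtype.val h)⟩
      invFun f := ⟨⟨fun j => f j, fun a b h => f.injective (Subtype.ext h)⟩,
        mem_compl_hitting.2 fun j => (f j).2⟩
      left_inv _ := rfl
      right_inv _ := rfl }
  rw [← Fintype.card_coe, Fintype.card_congr e, Fintype.card_embedding_eq, Fintype.card_fin,
    Fintype.card_subtype_compl, Fintype.card_subtype_eq, Fintype.card_fin]

theorem card_hitting (i : Fin n) :
    #(hitting (k := k) i) = n.descFactorial k - (n - 1).descFactorial k := by
  have hcompl := card_compl (hitting (k := k) i)
  have hle := card_le_univ (hitting (k := k) i)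
  rw [card_compl_hitting, card_tup] at hcompl
  rw [card_tup] at hle
  omega

theorem sum_sum_hitting {M : Type*} [AddCommMonoid M] (f : Tup k n → M) :
    ∑ i, ∑ g ∈ hitting i, f g = k • ∑ g, f g := by
  simp only [hitting, sum_filter]
  rw [sum_comm, smul_sum]
  refine sum_congr rfl fun g _ => ?_
  have hrange : ({i | ∃ j, g.1 j = i} : Finset (Fin n)) = univ.image g.1 := by
    ext; simp
  rw [← sum_filter, hrange, sum_const, card_image_of_injective _ g.2, card_univ,
    Fintype.card_fin]

theorem factorial_sub_div_factorial (hkn : k ≤ n) :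
    ((n - k).factorial : ℝ) / n.factorial = (n.descFactorial k : ℝ)⁻¹ := by
  rw [← Nat.factorial_mul_descFactorial hkn, Nat.cast_mul]
  field_simp

theorem factorial_sub_div_factorial_mul_card_hitting (hkn : k ≤ n) (i : Fin n) :
    ((n - k).factorial : ℝ) / n.factorial * #(hitting (k := k) i) = k / n := by
  obtain ⟨m, rfl⟩ : ∃ m, n = m + 1 := Nat.exists_eq_succ_of_ne_zero i.pos.ne'
  have hrec := Nat.succ_descFactorial m k
  have hpos : 0 < (m + 1).descFactorial k := Nat.descFactorial_pos.2 hkn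
  rw [factorial_sub_div_factorial hkn, card_hitting, Nat.add_sub_cancel,
    Nat.cast_sub (Nat.descFactorial_le k m.le_succ)]
  rw [← Nat.cast_inj (R := ℝ)] at hrec
  push_cast [Nat.cast_sub hkn] at hrec ⊢
  field_simp
  linarith

end Hitting

section Contribution

variable {𝒵 : Type*} {n k : ℕ} {φ : (Fin k → 𝒵) → ℝ}

variable (n k φ) in
noncomputable def ustatContrib (z : Fin n → 𝒵) (i : Fin n) : ℝ :=
  ((n - k).factorial : ℝ) / n.factorial * ∑ g ∈ hitting i, φ (fun j => z (g.1 j))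

theorem ustatFun_eq_ustatContrib_add (z : Fin n → 𝒵) (i : Fin n) :
    UstatFun n k φ z = ustatContrib n k φ z i +
      ((n - k).factorial : ℝ) / n.factorial * ∑ g ∈ (hitting i)ᶜ, φ (fun j => z (g.1 j)) := by
  rw [UstatFun, ustatContrib, ← mul_add, sum_add_sum_compl]

theorem ustatFun_sub_ustatFun_update (z : Fin n → 𝒵) (i : Fin n) (x : 𝒵) :
    UstatFun n k φ z - UstatFun n k φ (Function.update z i x) =
      ustatContrib n k φ z i - ustatContrib n k φ (Function.update z i x) i := by
  have hcompl : ∑ g ∈ (hitting i)ᶜ, φ (fun j => Function.update z i x (g.1 j)) =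
      ∑ g ∈ (hitting i)ᶜ, φ (fun j => z (g.1 j)) := by
    refine sum_congr rfl fun g hg => congrArg φ (funext fun j => ?_)
    exact Function.update_of_ne (mem_compl_hitting.1 hg j) x z
  rw [ustatFun_eq_ustatContrib_add z i, ustatFun_eq_ustatContrib_add _ i, hcompl]
  ring

theorem ustatContrib_le (hkn : k ≤ n) (hφ : ∀ v, φ v ≤ 1) (z : Fin n → 𝒵) (i : Fin n) :
    ustatContrib n k φ z i ≤ k / n := by
  calc ustatContrib n k φ z i ≤ ((n - k).factorial : ℝ) / n.factorial * #(hitting (k := k) i) :=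
        mul_le_mul_of_nonneg_left ((sum_le_card_nsmul _ _ 1 fun _ _ => hφ _).trans_eq
          (nsmul_one _)) (by positivity)
    _ = k / n := factorial_sub_div_factorial_mul_card_hitting hkn i

theorem sum_ustatContrib (z : Fin n → 𝒵) :
    ∑ i, ustatContrib n k φ z i = k * UstatFun n k φ z := by
  simp only [ustatContrib]
  rw [← mul_sum, sum_sum_hitting, nsmul_eq_mul, UstatFun]
  ring

variable (hφ : ∀ v, 0 ≤ φ v)
include hφ

theorem ustatFun_nonneg (z : Fin n → 𝒵) : 0 ≤ UstatFun n k φ z :=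
  mul_nonneg (by positivity) (sum_nonneg fun _ _ => hφ _)

theorem ustatContrib_nonneg (z : Fin n → 𝒵) (i : Fin n) : 0 ≤ ustatContrib n k φ z i :=
  mul_nonneg (by positivity) (sum_nonneg fun _ _ => hφ _)

theorem ustatLOO_le_ustatFun (z : Fin n → 𝒵) (i : Fin n) :
    UstatLOO n k φ z i ≤ UstatFun n k φ z := by
  simpa [UstatLOO] using ciInf_le (f := fun x => UstatFun n k φ (Function.update z i x))
    ⟨0, Set.forall_mem_range.2 fun x => ustatFun_nonneg hφ _⟩ (z i)

theorem ustatFun_sub_ustatLOO_le_ustatContrib (z : Fin n → 𝒵) (i : Fin n) :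
    UstatFun n k φ z - UstatLOO n k φ z i ≤ ustatContrib n k φ z i := by
  have : Nonempty 𝒵 := ⟨z i⟩
  have : UstatFun n k φ z - ustatContrib n k φ z i ≤ UstatLOO n k φ z i := by
    refine le_ciInf fun x => ?_
    linarith [ustatFun_sub_ustatFun_update (φ := φ) z i x,
      ustatContrib_nonneg hφ (Function.update z i x) i]
  linarith

end Contribution

end TransferUQ

open TransferUQ in
theorem ustatistic_self_bounding_general
    {𝒵 : Type*} (n k : ℕ) (hkn : k ≤ n)
    (φ : (Fin k → 𝒵) → ℝ) (hφ01 : ∀ v, φ v ∈ Set.Icc (0:ℝ) 1)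
    (z : Fin n → 𝒵) :
    (∀ i : Fin n, 0 ≤ TransferUQ.UstatFun n k φ z - TransferUQ.UstatLOO n k φ z i ∧
        TransferUQ.UstatFun n k φ z - TransferUQ.UstatLOO n k φ z i ≤ (k : ℝ) / n) ∧
      ∑ i : Fin n, (TransferUQ.UstatFun n k φ z - TransferUQ.UstatLOO n k φ z i) ^ 2 ≤
        ((k : ℝ) ^ 2 / n) * TransferUQ.UstatFun n k φ z := by
  have hφ0 : ∀ v, 0 ≤ φ v := fun v => (hφ01 v).1
  have hφ1 : ∀ v, φ v ≤ 1 := fun v => (hφ01 v).2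
  have hgap (i : Fin n) : 0 ≤ UstatFun n k φ z - UstatLOO n k φ z i ∧
      UstatFun n k φ z - UstatLOO n k φ z i ≤ k / n :=
    ⟨sub_nonneg.2 (ustatLOO_le_ustatFun hφ0 z i),
      (ustatFun_sub_ustatLOO_le_ustatContrib hφ0 z i).trans (ustatContrib_le hkn hφ1 z i)⟩
  refine ⟨hgap, ?_⟩
  calc ∑ i, (UstatFun n k φ z - UstatLOO n k φ z i) ^ 2
      ≤ k / n * ∑ i, ustatContrib n k φ z i :=
        sum_sq_le_mul_sum_of_le _ (fun i _ => (hgap i).1)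
          (fun i _ => ustatFun_sub_ustatLOO_le_ustatContrib hφ0 z i)
          (fun i _ => ustatContrib_le hkn hφ1 z i)
    _ = k ^ 2 / n * UstatFun n k φ z := by
      rw [sum_ustatContrib]
      ring

/-- **Self-bounding properties of U-statistics with nonnegative bounded kernels.** For any
kernel `φ : 𝒵^k → [0,1]` and any data `z ∈ 𝒵^n`:
`0 ≤ U(z) − U_i(z) ≤ k/n` for every `i`, and `∑_{i=1}^n (U(z) − U_i(z))² ≤ (k²/n)·U(z)`. -/
theorem ustatistic_self_bounding
    {𝒵 : Type*} [Nonempty 𝒵] (n k : ℕ) (hk : 1 ≤ k) (hkn : k ≤ n)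
    (φ : (Fin k → 𝒵) → ℝ) (hφ01 : ∀ v, φ v ∈ Set.Icc (0:ℝ) 1)
    (z : Fin n → 𝒵) :
    (∀ i : Fin n, 0 ≤ TransferUQ.UstatFun n k φ z - TransferUQ.UstatLOO n k φ z i ∧
        TransferUQ.UstatFun n k φ z - TransferUQ.UstatLOO n k φ z i ≤ (k : ℝ) / n) ∧
      ∑ i : Fin n, (TransferUQ.UstatFun n k φ z - TransferUQ.UstatLOO n k φ z i) ^ 2 ≤
        ((k : ℝ) ^ 2 / n) * TransferUQ.UstatFun n k φ z :=
  ustatistic_self_bounding_general n k hkn φ hφ01 z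
end
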